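/- Let R be the monoid of functions r : S → S such that (i) qr ≤_𝓡 q for all q; (ii) q 𝓛 q′ implies qr 𝓛 q′r; (iii) there exists q_r ∈ S¹ with qr = q q_r whenever qr 𝓡 q. Then R is closed under composition (so is a transformation monoid on S), contains every blowup operator on S, and contains each right multiplication map r_m for m ∈ S¹. -/

import Mathlib

/-!
Conditions (i) and (ii) are preserved by composition and hold for right multiplications,
and for a composite `q ↦ (qr)r'` with `(qr)r' 𝓡 q` both steps are 𝓡-preserving, so
`q_{rr'} = q_r q_{r'}` works. For a blowup operator `b` take `q_b = 1`: if `sb 𝓡 s`, then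
`sb ≤_𝓛 s` and stability of the finite semigroup `S` give `sb 𝓛 s`, so `sb 𝓗 s`, which
forces `sb = s`.
-/

open Pointwise

/-- A variety of finite groups: a class of finite groups closed under finite direct
products, subgroups and homomorphic images. -/
structure GroupVariety : Type 1 where
  mem : ∀ (G : Type) [Group G] [Finite G], Prop
  closed_prod : ∀ (G H : Type) [Group G] [Finite G] [Group H] [Finite H],
    mem G → mem H → mem (G × H)
  closed_sub : ∀ (G : Type) [Group G] [Finite G] (K : Subgroup G), mem G → mem K
  closed_hom : ∀ (G H : Type) [Group G] [Finite G] [Group H] [Finite H] (f : G →* H),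
    Function.Surjective f → mem G → mem H

/-- The 𝐇-kernel of a finite group: the smallest normal subgroup whose quotient
belongs to the class `P` of finite groups. -/
def HKer (P : ∀ (G : Type) [Group G] [Finite G], Prop) (G : Type) [Group G] [Finite G] :
    Subgroup G :=
  sInf {N : Subgroup G |
    ∃ h : N.Normal, @P (G ⧸ N) (@QuotientGroup.Quotient.group G _ N h) inferInstance}

/-- Green's preorder `x ≤_𝓛 y`, i.e. `x ∈ S¹y`. -/
def leL {S : Type} [Semigroup S] (x y : S) : Prop := x = y ∨ ∃ a, x = a * y
/-- Green's preorder `x ≤_𝓡 y`, i.e. `x ∈ yS¹`. -/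
def leR {S : Type} [Semigroup S] (x y : S) : Prop := x = y ∨ ∃ a, x = y * a
/-- Green's relation `𝓛`. -/
def eqL {S : Type} [Semigroup S] (x y : S) : Prop := leL x y ∧ leL y x
/-- Green's relation `𝓡`. -/
def eqR {S : Type} [Semigroup S] (x y : S) : Prop := leR x y ∧ leR y x
/-- Green's preorder `≤_𝓗`. -/
def leH {S : Type} [Semigroup S] (x y : S) : Prop := leL x y ∧ leR x y
/-- Green's relation `𝓗`. -/
def eqH {S : Type} [Semigroup S] (x y : S) : Prop := eqL x y ∧ eqR x y
/-- The 𝓗-class of `x`. -/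
def HClass {S : Type} [Semigroup S] (x : S) : Set S := {y | eqH y x}
/-- The 𝓛-class of `x`. -/
def LClass {S : Type} [Semigroup S] (x : S) : Set S := {y | eqL y x}

/-- The right stabilizer of a subset of `S`, as a submonoid of `S¹ = WithOne S`. -/
def stRsub {S : Type} [Semigroup S] (X : Set S) : Submonoid (WithOne S) where
  carrier := {u | ∀ x ∈ X, ∃ y ∈ X, (↑x * u : WithOne S) = ↑y}
  one_mem' := fun x hx => ⟨x, hx, mul_one _⟩
  mul_mem' := by
    intro u v hu hv x hx
    obtain ⟨y, hy, hxy⟩ := hu x hx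
    obtain ⟨z, hz, hyz⟩ := hv y hy
    exact ⟨z, hz, by rw [← mul_assoc, hxy, hyz]⟩

/-- Right multiplication by an element of `S¹ = WithOne S`, as a map `S → S`. -/
noncomputable def actW {S : Type} [Semigroup S] (q : S) (m : WithOne S) : S :=
  @dite _ (m = 1) (Classical.dec _) (fun _ => q) (fun h => q * WithOne.unone h)

/-- `s` is an 𝐇-element: the right Schützenberger group of its 𝓗-class lies in `V`;
equivalently, there is a group `G` in `V` and a surjection from the right stabilizer of
`H_s` onto `G` whose kernel is exactly the kernel of the action on `H_s`. -/
def IsHElement (V : GroupVariety) {S : Type} [Semigroup S] (s : S) : Prop :=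
  ∃ (G : Type) (iG : Group G) (fG : Finite G), @GroupVariety.mem V G iG fG ∧
    ∃ f : ↥(stRsub (HClass s)) →* G, Function.Surjective f ∧
      ∀ u v : ↥(stRsub (HClass s)),
        f u = f v ↔ ∀ x ∈ HClass s, ((↑x : WithOne S) * ↑u) = ↑x * ↑v

/-- A subset of `2^T` is H̄-saturated: a subsemigroup, downward closed, and closed
under taking unions of 𝐇-kernels of its subgroups. -/
def Saturated (V : GroupVariety) (T : Type) [Semigroup T] (A : Set (Set T)) : Prop :=
  (∀ X ∈ A, ∀ Y ∈ A, X * Y ∈ A) ∧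
  (∀ X ∈ A, ∀ Y : Set T, Y ⊆ X → Y ∈ A) ∧
  (∀ (G : Type) (iG : Group G) (fG : Finite G) (ι : @MulHom G (Set T) _ _),
      Function.Injective ι → (∀ g : G, ι g ∈ A) →
      (⋃ g ∈ (@HKer V.mem G iG fG : Subgroup G), ι g) ∈ A)

/-- The H̄-saturation of the set of singletons in `2^T`. -/
def SatSet (V : GroupVariety) (T : Type) [Semigroup T] [Finite T] : Set (Set T) :=
  ⋂₀ {A | Saturated V T A ∧ ∀ t : T, {t} ∈ A}

/-- The H̄-saturation `S = Sat_H̄(Tη)` of the singletons, as a subsemigroup of `2^T`. -/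
def SatSub (V : GroupVariety) (T : Type) [Semigroup T] [Finite T] : Subsemigroup (Set T) where
  carrier := SatSet V T
  mul_mem' := by
    intro a b ha hb
    rw [SatSet, Set.mem_sInter] at *
    exact fun A hA => hA.1.1 a (ha A hA) b (hb A hA)

/-- A pre-blowup operator on `S = Sat_H̄(Tη)`: (i) on each 𝓛-class it is given by right
multiplication by some `m_L ∈ S¹`; (ii) it fixes the 𝐇-elements and moves every other
element strictly 𝓗-downward; (iii) it enlarges each element (as a subset of `T`). -/
def IsPreBlowup (V : GroupVariety) (T : Type) [Semigroup T] [Finite T]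
    (b : ↥(SatSub V T) → ↥(SatSub V T)) : Prop :=
  (∀ s : ↥(SatSub V T), ∃ m : WithOne ↥(SatSub V T), ∀ s', eqL s' s → b s' = actW s' m) ∧
  (∀ s : ↥(SatSub V T), IsHElement V s → b s = s) ∧
  (∀ s : ↥(SatSub V T), ¬ IsHElement V s → leH (b s) s ∧ ¬ eqH (b s) s) ∧
  (∀ s : ↥(SatSub V T), (↑s : Set T) ⊆ (↑(b s) : Set T))

/-- The monoid `R` of functions on `W`: (i) `qr ≤_𝓡 q`; (ii) `r` preserves `𝓛`;
(iii) there is `q_r ∈ W¹` with `qr = q·q_r` whenever `qr 𝓡 q`. -/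
def RMon (W : Type) [Semigroup W] : Set (W → W) :=
  {r | (∀ q, leR (r q) q) ∧ (∀ q q', eqL q q' → eqL (r q) (r q')) ∧
       ∃ qr : WithOne W, ∀ q, eqR (r q) q → r q = actW q qr}

instance WithOne.instFinite {α : Type} [Finite α] : Finite (WithOne α) :=
  inferInstanceAs (Finite (Option α))

theorem eq_pow_mul_mul_pow {M : Type} [Monoid M] {u y v : M} (h : y = u * y * v) (k : ℕ) :
    y = u ^ k * y * v ^ k := by
  induction k with
  | zero => simp
  | succ k ih =>
    calc y = u ^ k * (u * y * v) * v ^ k := by rw [← h, ← ih]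
      _ = u ^ (k + 1) * y * v ^ (k + 1) := by rw [pow_succ, pow_succ' v]; simp only [mul_assoc]

theorem exists_eq_mul_mul_of_eq_mul_mul {M : Type} [Monoid M] [Finite M] {u y v : M}
    (h : y = u * y * v) : ∃ w, y = w * (u * y) := by
  obtain ⟨m, n, hmn, hpow⟩ :=
    Set.finite_univ.exists_lt_map_eq_of_forall_mem (f := (u ^ · : ℕ → M)) fun _ => Set.mem_univ _
  obtain ⟨p, rfl⟩ := Nat.exists_eq_add_of_lt hmn
  -- From `u ^ m = u ^ (m + p + 1)` we get `y = y v ^ (p + 1)`, hence `y = u ^ (p + 1) y`.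
  have hv : y = y * v ^ (p + 1) :=
    calc y = u ^ (m + p + 1) * y * v ^ (m + p + 1) := eq_pow_mul_mul_pow h _
      _ = (u ^ m * y * v ^ m) * v ^ (p + 1) := by
        rw [← hpow, add_assoc, pow_add v, mul_assoc, mul_assoc, mul_assoc]
      _ = y * v ^ (p + 1) := by rw [← eq_pow_mul_mul_pow h]
  refine ⟨u ^ p, ?_⟩
  calc y = u ^ (p + 1) * (y * v ^ (p + 1)) := by rw [← mul_assoc, ← eq_pow_mul_mul_pow h]
    _ = u ^ p * (u * y) := by rw [← hv, pow_succ, mul_assoc]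

section Green

variable {S : Type} [Semigroup S]

theorem leL_iff_exists_withOne {x y : S} : leL x y ↔ ∃ u : WithOne S, (x : WithOne S) = u * y := by
  constructor
  · rintro (rfl | ⟨a, rfl⟩)
    · exact ⟨1, (one_mul _).symm⟩
    · exact ⟨a, WithOne.coe_mul _ _⟩
  · rintro ⟨u, hu⟩
    induction u using WithOne.recOneCoe with
    | one => exact Or.inl (WithOne.coe_injective (by simpa using hu))
    | coe a => exact Or.inr ⟨a, WithOne.coe_injective (by simpa using hu)⟩

theorem leR_iff_exists_withOne {x y : S} : leR x y ↔ ∃ u : WithOne S, (x : WithOne S) = y * u := by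
  constructor
  · rintro (rfl | ⟨a, rfl⟩)
    · exact ⟨1, (mul_one _).symm⟩
    · exact ⟨a, WithOne.coe_mul _ _⟩
  · rintro ⟨u, hu⟩
    induction u using WithOne.recOneCoe with
    | one => exact Or.inl (WithOne.coe_injective (by simpa using hu))
    | coe a => exact Or.inr ⟨a, WithOne.coe_injective (by simpa using hu)⟩

theorem leR_refl (x : S) : leR x x := Or.inl rfl

theorem leR_trans {x y z : S} (hxy : leR x y) (hyz : leR y z) : leR x z := by
  obtain ⟨u, hu⟩ := leR_iff_exists_withOne.mp hxy
  obtain ⟨v, hv⟩ := leR_iff_exists_withOne.mp hyz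
  exact leR_iff_exists_withOne.mpr ⟨v * u, by rw [hu, hv, mul_assoc]⟩

theorem leH_refl (x : S) : leH x x := ⟨Or.inl rfl, Or.inl rfl⟩

/-- Stability of finite semigroups. -/
theorem leL_of_leL_of_leR [Finite S] {x y : S} (hxy : leL x y) (hyx : leR y x) : leL y x := by
  obtain ⟨u, hu⟩ := leL_iff_exists_withOne.mp hxy
  obtain ⟨v, hv⟩ := leR_iff_exists_withOne.mp hyx
  obtain ⟨w, hw⟩ := exists_eq_mul_mul_of_eq_mul_mul (hv.trans (by rw [hu]))
  exact leL_iff_exists_withOne.mpr ⟨w, by rw [hw, ← hu]⟩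

theorem coe_actW (q : S) (m : WithOne S) : ((actW q m : S) : WithOne S) = q * m := by
  induction m using WithOne.recOneCoe with
  | one => simp [actW]
  | coe a => simp [actW]

theorem actW_one (q : S) : actW q 1 = q := dif_pos rfl

theorem actW_actW (q : S) (m m' : WithOne S) : actW (actW q m) m' = actW q (m * m') :=
  WithOne.coe_injective <| by simp only [coe_actW, mul_assoc]

theorem leR_actW (q : S) (m : WithOne S) : leR (actW q m) q :=
  leR_iff_exists_withOne.mpr ⟨m, coe_actW q m⟩

theorem leL_actW {q q' : S} (h : leL q q') (m : WithOne S) : leL (actW q m) (actW q' m) := by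
  obtain ⟨u, hu⟩ := leL_iff_exists_withOne.mp h
  exact leL_iff_exists_withOne.mpr ⟨u, by rw [coe_actW, coe_actW, hu, mul_assoc]⟩

theorem eqL_actW {q q' : S} (h : eqL q q') (m : WithOne S) : eqL (actW q m) (actW q' m) :=
  ⟨leL_actW h.1 m, leL_actW h.2 m⟩

end Green

section RMon

variable {W : Type} [Semigroup W]

theorem id_mem_RMon : (id : W → W) ∈ RMon W :=
  ⟨leR_refl, fun _ _ h => h, 1, fun q _ => (actW_one q).symm⟩

theorem comp_mem_RMon {r r' : W → W} (hr : r ∈ RMon W) (hr' : r' ∈ RMon W) :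
    (fun q => r' (r q)) ∈ RMon W := by
  obtain ⟨hr_le, hr_L, qr, hr_R⟩ := hr
  obtain ⟨hr'_le, hr'_L, qr', hr'_R⟩ := hr'
  refine ⟨fun q => leR_trans (hr'_le _) (hr_le q), fun q q' h => hr'_L _ _ (hr_L _ _ h),
    qr * qr', fun q h => ?_⟩
  have h₁ : eqR (r q) q := ⟨hr_le q, leR_trans h.2 (hr'_le _)⟩
  have h₂ : eqR (r' (r q)) (r q) := ⟨hr'_le _, leR_trans (hr_le q) h.2⟩
  show r' (r q) = _
  rw [hr'_R _ h₂, hr_R q h₁, actW_actW]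

theorem actW_mem_RMon (m : WithOne W) : (fun q => actW q m) ∈ RMon W :=
  ⟨fun q => leR_actW q m, fun _ _ h => eqL_actW h m, m, fun _ _ => rfl⟩

theorem mem_RMon_of_leH [Finite W] {b : W → W}
    (hL : ∀ s, ∃ m : WithOne W, ∀ s', eqL s' s → b s' = actW s' m)
    (hle : ∀ q, leH (b q) q) (hfix : ∀ q, eqH (b q) q → b q = q) : b ∈ RMon W := by
  refine ⟨fun q => (hle q).2, fun q q' h => ?_, 1, fun q h => ?_⟩
  · obtain ⟨m, hm⟩ := hL q'
    rw [hm q h, hm q' ⟨Or.inl rfl, Or.inl rfl⟩]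
    exact eqL_actW h m
  · have hbq : eqL (b q) q := ⟨(hle q).1, leL_of_leL_of_leR (hle q).1 h.2⟩
    rw [hfix q ⟨hbq, h⟩, actW_one]

end RMon

/-- `RMon` is a transformation monoid on `S = Sat_H̄(Tη)` containing every blowup
operator and every right multiplication map. -/
theorem rmon_properties (V : GroupVariety) (T : Type) [Semigroup T] [Finite T] :
    ((id : ↥(SatSub V T) → ↥(SatSub V T)) ∈ RMon ↥(SatSub V T)) ∧
    (∀ r r' : ↥(SatSub V T) → ↥(SatSub V T),
      r ∈ RMon ↥(SatSub V T) → r' ∈ RMon ↥(SatSub V T) →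
      (fun q => r' (r q)) ∈ RMon ↥(SatSub V T)) ∧
    (∀ b : ↥(SatSub V T) → ↥(SatSub V T), IsPreBlowup V T b → (∀ s, b (b s) = b s) →
      b ∈ RMon ↥(SatSub V T)) ∧
    (∀ m : WithOne ↥(SatSub V T), (fun q => actW q m) ∈ RMon ↥(SatSub V T)) := by
  refine ⟨id_mem_RMon, fun _ _ => comp_mem_RMon, ?_, actW_mem_RMon⟩
  rintro b ⟨hL, hfix, hlt, -⟩ -
  refine mem_RMon_of_leH hL (fun s => ?_) (fun s hs => ?_)
  · by_cases h : IsHElement V s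
    · rw [hfix s h]; exact leH_refl s
    · exact (hlt s h).1
  · by_contra hne
    exact (hlt s fun h => hne (hfix s h)).2 hs
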